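/- Let D be a finite multiset of points (b,d) in the plane with 0 ≤ b < d, let d_max be the maximum death time among points of D, and let B_D : ℝ → ℕ be the Betti curve of D, i.e., B_D(s) is the number of points (b,d) of D (counted with multiplicity) such that b ≤ s < d. Then the integral of B_D over the interval (0, d_max) equals twice the 1-Wasserstein distance from D to the empty diagram: ∫_{(0,d_max)} B_D(s) ds = 2 · W₁(D, D_∅), where W₁(D, D_∅) = (1/2) · Σ_{(b,d)∈D} (d − b). -/

import Mathlib

open MeasureTheory

open scoped Classical in
/-- The Betti curve of a persistence diagram `D` (a finite multiset of birth–death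
pairs): `bettiCurve D s` is the number of points `(b, d)` of `D`, counted with
multiplicity, such that `b ≤ s < d`. -/
noncomputable def bettiCurve (D : Multiset (ℝ × ℝ)) (s : ℝ) : ℕ :=
  Multiset.card (D.filter fun p => p.1 ≤ s ∧ s < p.2)

open scoped Classical in
lemma betti_key (dmax : ℝ) (D : Multiset (ℝ × ℝ))
    (hD : ∀ p ∈ D, 0 ≤ p.1 ∧ p.1 < p.2)
    (hub : ∀ p ∈ D, p.2 ≤ dmax) :
    IntegrableOn (fun s => (bettiCurve D s : ℝ)) (Set.Ioo 0 dmax) ∧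
    ∫ s in Set.Ioo (0:ℝ) dmax, (bettiCurve D s : ℝ)
      = (D.map fun p => p.2 - p.1).sum := by
  induction D using Multiset.induction_on with
  | empty =>
      constructor
      · simp [bettiCurve, integrableOn_const]
      · simp [bettiCurve]
  | cons a D ih =>
      have ha := hD a (Multiset.mem_cons_self a D)
      have hua := hub a (Multiset.mem_cons_self a D)
      have hD' : ∀ p ∈ D, 0 ≤ p.1 ∧ p.1 < p.2 := fun p hp => hD p (Multiset.mem_cons_of_mem hp)
      have hub' : ∀ p ∈ D, p.2 ≤ dmax := fun p hp => hub p (Multiset.mem_cons_of_mem hp)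
      obtain ⟨ihI, ihE⟩ := ih hD' hub'
      have hsplit : ∀ s, (bettiCurve (a ::ₘ D) s : ℝ)
          = Set.indicator (Set.Ico a.1 a.2) (fun _ => (1:ℝ)) s + (bettiCurve D s : ℝ) := by
        intro s
        simp only [bettiCurve, Multiset.filter_cons, Multiset.card_add]
        by_cases h : a.1 ≤ s ∧ s < a.2
        · simp [h, Set.indicator_apply, Set.mem_Ico]
        · simp [h, Set.indicator_apply, Set.mem_Ico]
      have hind : IntegrableOn (Set.indicator (Set.Ico a.1 a.2) (fun _ => (1:ℝ)))
          (Set.Ioo 0 dmax) := by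
        apply Integrable.integrableOn
        rw [integrable_indicator_iff measurableSet_Ico]
        exact integrableOn_const (by simp [Real.volume_Ico])
      have hvol : volume (Set.Ioo 0 dmax ∩ Set.Ico a.1 a.2) = ENNReal.ofReal (a.2 - a.1) := by
        apply le_antisymm
        · calc volume (Set.Ioo 0 dmax ∩ Set.Ico a.1 a.2) ≤ volume (Set.Ico a.1 a.2) :=
                measure_mono Set.inter_subset_right
            _ = ENNReal.ofReal (a.2 - a.1) := Real.volume_Ico
        · calc ENNReal.ofReal (a.2 - a.1) = volume (Set.Ioo a.1 a.2) := Real.volume_Ioo.symm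
            _ ≤ volume (Set.Ioo 0 dmax ∩ Set.Ico a.1 a.2) := by
                apply measure_mono
                rintro s ⟨h1, h2⟩
                exact ⟨⟨lt_of_le_of_lt ha.1 h1, lt_of_lt_of_le h2 hua⟩, le_of_lt h1, h2⟩
      have hindint : ∫ s in Set.Ioo (0:ℝ) dmax,
          Set.indicator (Set.Ico a.1 a.2) (fun _ => (1:ℝ)) s = a.2 - a.1 := by
        rw [setIntegral_indicator measurableSet_Ico, setIntegral_const, measureReal_def, hvol, smul_eq_mul,
          mul_one, ENNReal.toReal_ofReal (by linarith [ha.2] : (0:ℝ) ≤ a.2 - a.1)]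
      constructor
      · exact MeasureTheory.IntegrableOn.congr_fun (hind.add ihI)
          (fun s _ => (hsplit s).symm) measurableSet_Ioo
      · calc ∫ s in Set.Ioo (0:ℝ) dmax, (bettiCurve (a ::ₘ D) s : ℝ)
            = ∫ s in Set.Ioo (0:ℝ) dmax,
              (Set.indicator (Set.Ico a.1 a.2) (fun _ => (1:ℝ)) s + (bettiCurve D s : ℝ)) := by
              exact setIntegral_congr_fun measurableSet_Ioo (fun s _ => hsplit s)
          _ = (a.2 - a.1) + (D.map fun p => p.2 - p.1).sum := by
              rw [integral_add hind ihI, hindint, ihE]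
          _ = ((a ::ₘ D).map fun p => p.2 - p.1).sum := by simp


/-- **Proposition 1.** For a persistence diagram `D` (finite multiset of points
`(b, d)` with `0 ≤ b < d`) with maximum death time `dmax`, the integral of the
Betti curve over `(0, dmax)` equals twice the 1-Wasserstein distance of `D` to
the empty diagram, where `W₁(D, D_∅) = (1/2) · Σ_{(b,d) ∈ D} (d - b)`. -/
theorem betti_integral_eq_two_mul_wasserstein_to_empty
    (D : Multiset (ℝ × ℝ)) (dmax : ℝ)
    (hD : ∀ p ∈ D, 0 ≤ p.1 ∧ p.1 < p.2)
    (hub : ∀ p ∈ D, p.2 ≤ dmax)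
    (hmem : ∃ p ∈ D, p.2 = dmax) :
    ∫ s in Set.Ioo (0 : ℝ) dmax, (bettiCurve D s : ℝ)
      = 2 * ((1 / 2) * ((D.map fun p => p.2 - p.1).sum)) := by
  rw [(betti_key dmax D hD hub).2]; ring
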